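/- (Lemma 2.3.) At every point of W^{ijk}, the Jacobian matrix of the map (w_i,w_j,w_k) ↦ (θ^i_jk, θ^j_ki, θ^k_ij) is symmetric; that is, ∂θ^i_jk/∂w_j = ∂θ^j_ki/∂w_i, ∂θ^j_ki/∂w_k = ∂θ^k_ij/∂w_j, and ∂θ^k_ij/∂w_i = ∂θ^i_jk/∂w_k. -/

import Mathlib

open Real Filter Set

/-- Inverse hyperbolic cosine. -/
noncomputable def arcosh (x : ℝ) : ℝ := Real.log (x + Real.sqrt (x ^ 2 - 1))

/-- The length of the side of a right-angled hyperbolic hexagon opposite the side of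
length `x`, where the three pairwise non-adjacent sides have lengths `x, y, z`. -/
noncomputable def theta (x y z : ℝ) : ℝ :=
  _root_.arcosh ((Real.cosh x + Real.cosh y * Real.cosh z) / (Real.sinh y * Real.sinh z))

/-- The conformally deformed edge length `l` with `cosh (l/2) = e^s · cosh (c/2)`,
where `c` is the original edge length and `s` is the sum of the two conformal
factors at the ends of the edge. -/
noncomputable def hexLen (c s : ℝ) : ℝ := 2 * _root_.arcosh (Real.exp s * Real.cosh (c / 2))

/-- The space `W^{ijk}` of conformal factors `p = (w_i, w_j, w_k)` for which the three
deformed edge lengths `l_jk, l_ki, l_ij` are defined and positive; here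
`a = l⁰_jk`, `b = l⁰_ki`, `c = l⁰_ij`. -/
def Wijk (a b c : ℝ) : Set (ℝ × ℝ × ℝ) :=
  {p | 1 < Real.exp (p.2.1 + p.2.2) * Real.cosh (a / 2) ∧
       1 < Real.exp (p.2.2 + p.1) * Real.cosh (b / 2) ∧
       1 < Real.exp (p.1 + p.2.1) * Real.cosh (c / 2)}

/-- `θ^i_jk` as a function of `p = (w_i, w_j, w_k)`, where `a = l⁰_jk`, `b = l⁰_ki`,
`c = l⁰_ij`: the boundary arc opposite the deformed edge `l_jk`. -/
noncomputable def thetaI (a b c : ℝ) (p : ℝ × ℝ × ℝ) : ℝ :=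
  theta (hexLen a (p.2.1 + p.2.2)) (hexLen b (p.2.2 + p.1)) (hexLen c (p.1 + p.2.1))

/-- `θ^j_ki` as a function of `p = (w_i, w_j, w_k)`. -/
noncomputable def thetaJ (a b c : ℝ) (p : ℝ × ℝ × ℝ) : ℝ :=
  theta (hexLen b (p.2.2 + p.1)) (hexLen c (p.1 + p.2.1)) (hexLen a (p.2.1 + p.2.2))

/-- `θ^k_ij` as a function of `p = (w_i, w_j, w_k)`. -/
noncomputable def thetaK (a b c : ℝ) (p : ℝ × ℝ × ℝ) : ℝ :=
  theta (hexLen c (p.1 + p.2.1)) (hexLen a (p.2.1 + p.2.2)) (hexLen b (p.2.2 + p.1))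

/-- The Jacobian matrix `∂(θ^i_jk, θ^j_ki, θ^k_ij)/∂(w_i, w_j, w_k)` at `p`. -/
noncomputable def Jac (a b c : ℝ) (p : ℝ × ℝ × ℝ) : Matrix (Fin 3) (Fin 3) ℝ :=
  fun r s =>
    fderiv ℝ (![thetaI a b c, thetaJ a b c, thetaK a b c] r) p
      (![((1:ℝ),(0:ℝ),(0:ℝ)), ((0:ℝ),(1:ℝ),(0:ℝ)), ((0:ℝ),(0:ℝ),(1:ℝ))] s)

/-!
Differentiating the hexagon cosine law gives `∂θ/∂x = sinh x / √N` and
`∂θ/∂y = -(cosh z + cosh x cosh y) / (sinh y √N)` for `θ = theta x y z`, where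
`N = hexGram x y z` is symmetric in `x, y, z`, while the deformed length satisfies
`dl/ds = 2 coth (l/2) = 2 (cosh l + 1) / sinh l`. The factor `w_j` enters `θ^i_jk` through
`x = l_jk` and `z = l_ij`, so by the chain rule
`∂θ^i_jk/∂w_j = (2/√N) (cosh x + 1 - (cosh y + cosh x cosh z)/(cosh z - 1))
             = -2 (1 + cosh x + cosh y - cosh z) / ((cosh z - 1) √N)`,
which is symmetric in `x, y`, that is, in the roles of `i` and `j`.
-/

lemma arcosh_eq_real_arcosh : _root_.arcosh = Real.arcosh := rfl

section HexLen

variable {c s : ℝ}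

lemma hexLen_pos (h : 1 < exp s * cosh (c / 2)) : 0 < hexLen c s :=
  mul_pos two_pos (Real.arcosh_pos h)

lemma hasDerivAt_hexLen (h : 1 < exp s * cosh (c / 2)) :
    HasDerivAt (hexLen c) (2 * (cosh (hexLen c s) + 1) / sinh (hexLen c s)) s := by
  set t := exp s * cosh (c / 2) with ht
  have harc := ((Real.hasDerivAt_arcosh h).comp s
    ((hasDerivAt_exp s).mul_const (cosh (c / 2)))).const_mul 2
  refine harc.congr_deriv ?_
  rw [hexLen, ← ht, arcosh_eq_real_arcosh, cosh_two_mul, sinh_two_mul, Real.cosh_arcosh h.le,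
    Real.sinh_arcosh h.le]
  field_simp
  rw [sq_sqrt (by nlinarith)]
  ring

end HexLen

/-- `√(hexGram x y z) = sinh y * sinh z * sinh (theta x y z)`, symmetric in `x, y, z`. -/
noncomputable def hexGram (x y z : ℝ) : ℝ :=
  cosh x ^ 2 + cosh y ^ 2 + cosh z ^ 2 + 2 * cosh x * cosh y * cosh z - 1

lemma hexGram_pos (x y z : ℝ) : 0 < hexGram x y z := by
  have hxy := one_le_mul_of_one_le_of_one_le (one_le_cosh x) (one_le_cosh y)
  have hxyz := one_le_mul_of_one_le_of_one_le hxy (one_le_cosh z)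
  unfold hexGram
  nlinarith [one_le_cosh x, one_le_cosh y, one_le_cosh z]

lemma hexGram_rotate (x y z : ℝ) : hexGram y z x = hexGram x y z := by
  unfold hexGram; ring

section HexRatio

variable {x y z : ℝ}

lemma one_lt_hexRatio (hy : 0 < y) (hz : 0 < z) :
    1 < (cosh x + cosh y * cosh z) / (sinh y * sinh z) := by
  have hyz : 0 < sinh y * sinh z := mul_pos (sinh_pos_iff.2 hy) (sinh_pos_iff.2 hz)
  rw [one_lt_div hyz]
  nlinarith [cosh_pos x, cosh_sub y z, one_le_cosh (y - z)]

lemma sqrt_hexRatio_sq_sub_one (hy : 0 < y) (hz : 0 < z) :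
    √(((cosh x + cosh y * cosh z) / (sinh y * sinh z)) ^ 2 - 1) =
      √(hexGram x y z) / (sinh y * sinh z) := by
  have hyz : 0 < sinh y * sinh z := mul_pos (sinh_pos_iff.2 hy) (sinh_pos_iff.2 hz)
  rw [← sqrt_sq hyz.le, ← sqrt_div' _ (sq_nonneg _), sqrt_sq hyz.le]
  congr 1
  unfold hexGram
  field_simp
  rw [sinh_sq y, sinh_sq z]
  ring

end HexRatio

section Derivatives

variable {E : Type*} [NormedAddCommGroup E] [NormedSpace ℝ E] {p : E}

lemma hasFDerivAt_theta {X Y Z : E → ℝ} {X' Y' Z' : E →L[ℝ] ℝ}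
    (hX : HasFDerivAt X X' p) (hY : HasFDerivAt Y Y' p) (hZ : HasFDerivAt Z Z' p)
    (hy : 0 < Y p) (hz : 0 < Z p) :
    HasFDerivAt (fun q => theta (X q) (Y q) (Z q))
      ((√(hexGram (X p) (Y p) (Z p)))⁻¹ •
        (sinh (X p) • X'
          - ((cosh (Z p) + cosh (X p) * cosh (Y p)) / sinh (Y p)) • Y'
          - ((cosh (Y p) + cosh (X p) * cosh (Z p)) / sinh (Z p)) • Z')) p := by
  have hsy := sinh_pos_iff.2 hy
  have hsz := sinh_pos_iff.2 hz
  have hN := sqrt_pos.2 (hexGram_pos (X p) (Y p) (Z p))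
  have hden : HasFDerivAt (fun q => (sinh (Y q) * sinh (Z q))⁻¹)
      (-((sinh (Y p) * sinh (Z p)) ^ 2)⁻¹ •
        (sinh (Y p) • (cosh (Z p) • Z') + sinh (Z p) • (cosh (Y p) • Y'))) p :=
    (hasDerivAt_inv (mul_pos hsy hsz).ne').comp_hasFDerivAt p (hY.sinh.mul hZ.sinh)
  have hratio := (hX.cosh.add (hY.cosh.mul hZ.cosh)).mul hden
  have harc :=
    (Real.hasDerivAt_arcosh (one_lt_hexRatio (x := X p) hy hz)).comp_hasFDerivAt p hratio
  refine (harc.congr_of_eventuallyEq (.of_forall fun q => ?_)).congr_fderiv ?_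
  · rfl
  · rw [sqrt_hexRatio_sq_sub_one hy hz]
    ext v
    simp only [smul_apply, sub_apply, add_apply, smul_eq_mul, Pi.add_apply, Pi.mul_apply]
    field_simp
    linear_combination (sinh (Z p) * cosh (Z p) * Y' v) * sinh_sq (Y p) +
      (sinh (Y p) * cosh (Y p) * Z' v) * sinh_sq (Z p)

lemma hasFDerivAt_hexLen {c : ℝ} {S : E → ℝ} {S' : E →L[ℝ] ℝ} (hS : HasFDerivAt S S' p)
    (h : 1 < exp (S p) * cosh (c / 2)) :
    HasFDerivAt (fun q => hexLen c (S q))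
      ((2 * (cosh (hexLen c (S p)) + 1) / sinh (hexLen c (S p))) • S') p :=
  (hasDerivAt_hexLen h).comp_hasFDerivAt p hS

lemma hasFDerivAt_theta_hexLen {a b c : ℝ} {u v w : E → ℝ} {u' v' w' : E →L[ℝ] ℝ}
    (hu : HasFDerivAt u u' p) (hv : HasFDerivAt v v' p) (hw : HasFDerivAt w w' p)
    (hup : 1 < exp (u p) * cosh (a / 2)) (hvp : 1 < exp (v p) * cosh (b / 2))
    (hwp : 1 < exp (w p) * cosh (c / 2)) :
    HasFDerivAt (fun q => theta (hexLen a (u q)) (hexLen b (v q)) (hexLen c (w q)))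
      ((2 / √(hexGram (hexLen a (u p)) (hexLen b (v p)) (hexLen c (w p)))) •
        ((cosh (hexLen a (u p)) + 1) • u'
          - ((cosh (hexLen c (w p)) + cosh (hexLen a (u p)) * cosh (hexLen b (v p))) /
              (cosh (hexLen b (v p)) - 1)) • v'
          - ((cosh (hexLen b (v p)) + cosh (hexLen a (u p)) * cosh (hexLen c (w p))) /
              (cosh (hexLen c (w p)) - 1)) • w')) p := by
  have hy := hexLen_pos hvp
  have hz := hexLen_pos hwp
  refine (hasFDerivAt_theta (hasFDerivAt_hexLen hu hup) (hasFDerivAt_hexLen hv hvp)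
    (hasFDerivAt_hexLen hw hwp) hy hz).congr_fderiv ?_
  have hsx := sinh_pos_iff.2 (hexLen_pos hup)
  have hsy := sinh_pos_iff.2 hy
  have hsz := sinh_pos_iff.2 hz
  have hcy := sub_pos.2 (one_lt_cosh.2 hy.ne')
  have hcz := sub_pos.2 (one_lt_cosh.2 hz.ne')
  ext e
  simp only [smul_apply, sub_apply, smul_eq_mul]
  field_simp
  rw [sinh_sq, sinh_sq]
  ring

end Derivatives

lemma add_one_sub_div_sub_one_comm {A B C : ℝ} (hC : C ≠ 1) :
    A + 1 - (B + A * C) / (C - 1) = B + 1 - (A + B * C) / (C - 1) := by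
  have : C - 1 ≠ 0 := sub_ne_zero.2 hC
  field_simp
  ring

theorem stmt_4 (a b c : ℝ)
    (p : ℝ × ℝ × ℝ) (hp : p ∈ Wijk a b c) :
    DifferentiableAt ℝ (thetaI a b c) p ∧
    DifferentiableAt ℝ (thetaJ a b c) p ∧
    DifferentiableAt ℝ (thetaK a b c) p ∧
    fderiv ℝ (thetaI a b c) p (0, 1, 0) = fderiv ℝ (thetaJ a b c) p (1, 0, 0) ∧
    fderiv ℝ (thetaJ a b c) p (0, 0, 1) = fderiv ℝ (thetaK a b c) p (0, 1, 0) ∧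
    fderiv ℝ (thetaK a b c) p (1, 0, 0) = fderiv ℝ (thetaI a b c) p (0, 0, 1) := by
  obtain ⟨hjk, hki, hij⟩ := hp
  have djk : HasFDerivAt (fun q : ℝ × ℝ × ℝ => q.2.1 + q.2.2) _ p :=
    (hasFDerivAt_snd (𝕜 := ℝ)).fst.add (hasFDerivAt_snd (𝕜 := ℝ)).snd
  have dki : HasFDerivAt (fun q : ℝ × ℝ × ℝ => q.2.2 + q.1) _ p :=
    (hasFDerivAt_snd (𝕜 := ℝ)).snd.add hasFDerivAt_fst
  have dij : HasFDerivAt (fun q : ℝ × ℝ × ℝ => q.1 + q.2.1) _ p :=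
    hasFDerivAt_fst.add (hasFDerivAt_snd (𝕜 := ℝ)).fst
  have hI : HasFDerivAt (thetaI a b c) _ p := hasFDerivAt_theta_hexLen djk dki dij hjk hki hij
  have hJ : HasFDerivAt (thetaJ a b c) _ p := hasFDerivAt_theta_hexLen dki dij djk hki hij hjk
  have hK : HasFDerivAt (thetaK a b c) _ p := hasFDerivAt_theta_hexLen dij djk dki hij hjk hki
  have hx := one_lt_cosh.2 (hexLen_pos hjk).ne'
  have hy := one_lt_cosh.2 (hexLen_pos hki).ne'
  have hz := one_lt_cosh.2 (hexLen_pos hij).ne'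
  refine ⟨hI.differentiableAt, hJ.differentiableAt, hK.differentiableAt, ?_, ?_, ?_⟩ <;>
    simp only [hI.fderiv, hJ.fderiv, hK.fderiv, smul_add, smul_apply, sub_apply, add_apply,
      ContinuousLinearMap.comp_apply, ContinuousLinearMap.coe_fst', ContinuousLinearMap.coe_snd',
      smul_eq_mul, mul_one, mul_zero, add_zero, sub_zero, zero_add]
  · rw [← hexGram_rotate, add_one_sub_div_sub_one_comm hz.ne']
  · rw [← hexGram_rotate, add_one_sub_div_sub_one_comm hx.ne']
  · rw [← hexGram_rotate, add_one_sub_div_sub_one_comm hy.ne']
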